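/- Let ε ∈ {1,2}^{p−1} and δ ∈ {0,1}^p with δ not identically zero, and consider the kernel L^ε_δ. If the set of indices k with δ_k = 1 is not of the form (k_1, k_2] for some 0 ≤ k_1 < k_2 ≤ p — that is, if δ does not consist of a (possibly empty) run of 0s, followed by a nonempty run of 1s, followed by a (possibly empty) run of 0s — then L^ε_δ(i,j) = 0 for all 1 ≤ i, j ≤ N. Moreover, if δ_k = 1 exactly for k ∈ (k_1, k_2], then L^ε_δ(i,j) = 0 for all i, j unless ε_1 = … = ε_{k_1−1} = 2 and ε_{k_2+1} = … = ε_{p−1} = 1. -/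

import Mathlib

open MeasureTheory ProbabilityTheory Complex
open scoped Real BigOperators Nat

noncomputable section

/-- Forward difference operator `∇f(x) = f(x+1) − f(x)`. -/
def nab (f : ℤ → ℂ) : ℤ → ℂ := fun x => f (x + 1) - f x

/-- Inverse difference: `∇⁻¹f(x) = ∑_{y<x} f(y)` (a `tsum`; for functions vanishing
to the left of some integer this is the finite sum of the paper). -/
def nabInv (f : ℤ → ℂ) : ℤ → ℂ := fun x => ∑' y : {y : ℤ // y < x}, f y.1

/-- `∇^k` for `k : ℤ`. -/
def nabIter (k : ℤ) (f : ℤ → ℂ) : ℤ → ℂ :=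
  if 0 ≤ k then nab^[k.toNat] f else nabInv^[(-k).toNat] f

/-- The negative binomial weight `w_m(x)`. -/
def wgt (q : ℝ) (m : ℕ) : ℤ → ℂ := fun x =>
  if 0 ≤ x then ((x.toNat + m - 1).choose x.toNat : ℂ) * ((1 : ℂ) - (q : ℂ)) ^ m * (q : ℂ) ^ x
  else 0

/-- Component `x_k` (1-based) of a vector `x : Fin N → ℤ`. -/
def vcomp {N : ℕ} (x : Fin N → ℤ) (k : ℕ) : ℤ :=
  if h : k - 1 < N then x ⟨k - 1, h⟩ else 0

/-- 1-based access to a finite tuple, extended by `0` out of range. -/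
def fext {d : ℕ} {α : Type*} [Zero α] (x : Fin d → α) : ℕ → α := fun k =>
  if h : 1 ≤ k ∧ k ≤ d then x ⟨k - 1, by omega⟩ else 0

/-- The growth function `𝐆(m,n)` built from weights `w`. -/
def growth (w : ℕ → ℕ → ℕ) : ℕ → ℕ → ℕ
  | 0, _ => 0
  | _ + 1, 0 => 0
  | m + 1, n + 1 => max (growth w m (n + 1)) (growth w (m + 1) n) + w (m + 1) (n + 1)
  termination_by m n => m + n

/-- Normalized contour integral `(1/(2πi)) ∮_{|z−c|=R} f(z) dz` (counterclockwise circle). -/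
def cint (c : ℂ) (R : ℝ) (f : ℂ → ℂ) : ℂ :=
  (2 * Real.pi * Complex.I)⁻¹ * (∮ z in C(c, R), f z)

/-- Iterated normalized contour integrals with centers `c` and radii `R`. -/
def multiCintC : (k : ℕ) → (c : Fin k → ℂ) → (R : Fin k → ℝ) → ((Fin k → ℂ) → ℂ) → ℂ
  | 0, _, _, f => f ![]
  | k + 1, c, R, f =>
      cint (c 0) (R 0) fun z =>
        multiCintC k (fun t => c t.succ) (fun t => R t.succ) fun w => f (Fin.cons z w)

/-- `G*(w | n, m, a)`. -/
def Gstar (q : ℝ) (n m a : ℤ) (w : ℂ) : ℂ :=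
  w ^ n * (1 - w) ^ (a + m) / (1 - w / (1 - (q : ℂ))) ^ m

/-- `G(w | n, m, a) = G*(w | n,m,a)/G*(1−√q | n,m,a)`. -/
def Gfun (q : ℝ) (n m a : ℤ) (w : ℂ) : ℂ :=
  Gstar q n m a w / Gstar q n m a (1 - (Real.sqrt q : ℂ))

/-- The block index `r` such that `n_{r−1} < i ≤ n_r`. -/
def blockIdx (n : ℕ → ℕ) (i : ℕ) : ℕ := sInf {r : ℕ | i ≤ n r}

/-- `r* = min{r, p−1}` for the block of `i`. -/
def rstar (p : ℕ) (n : ℕ → ℕ) (i : ℕ) : ℕ := min (blockIdx n i) (p - 1)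

/-- `m(i) = m_{r*}`. -/
def mOf (p : ℕ) (n m : ℕ → ℕ) (i : ℕ) : ℕ := m (rstar p n i)

/-- `a(i) = a_{r*}`. -/
def aOf (p : ℕ) (n : ℕ → ℕ) (a : ℕ → ℤ) (i : ℕ) : ℤ := a (rstar p n i)

/-- `n(i) = n_{r*}`. -/
def nOf (p : ℕ) (n : ℕ → ℕ) (i : ℕ) : ℕ := n (rstar p n i)


/-- The kernel `L^ε_δ(i,j)`: a `(p+2)`-fold contour integral where the `z_k`-contour
is the circle `C_k` of radius `ρ_k` centered at `1` if `δ_k = 1` and at `0` if `δ_k = 0`. -/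
def Ldelta (q : ℝ) (p : ℕ) (n m : ℕ → ℕ) (a : ℕ → ℤ) (τ1 τ2 : ℝ)
    (δ : ℕ → ℕ) (ρ : ℕ → ℝ) (i j : ℕ) : ℂ :=
  cint 0 τ1 (fun ζ1 => cint 0 τ2 (fun ζ2 =>
    multiCintC p (fun t => if δ (t.1 + 1) = 1 then 1 else 0) (fun t => ρ (t.1 + 1))
      (fun zv =>
        ((∏ k ∈ Finset.Icc 1 p,
            Gfun q ((n k : ℤ) - n (k - 1)) ((m k : ℤ) - m (k - 1)) (a k - a (k - 1))
              (fext zv k))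
          * (∏ k ∈ Finset.Icc 1 (p - 1), (fext zv k - fext zv (k + 1))⁻¹)
          * ((1 - ζ1) / (1 - fext zv 1)))
        / (Gfun q (i : ℤ) (mOf p n m i : ℤ) (aOf p n a i) ζ1
           * Gfun q ((n p : ℤ) - j + 1) ((m p : ℤ) - mOf p n m j) (a p - aOf p n a j) ζ2
           * ((fext zv 1 - ζ1) * (fext zv p - ζ2))))))

/-!
Call `k` isolated when `C_k` is a circle about `0` whose closed disc meets neither neighbouring
contour, i.e. each neighbour is a circle about `1` or a circle about `0` of larger radius. For an
isolated `1 < k < p` the integrand depends on `z_k` only through `G(z_k | Δ_k n, …)`, holomorphic on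
the disc because `Δ_k n ≥ 0` and `1, 1 - q` lie outside it, and through `(z_{k-1} - z_k)⁻¹` and
`(z_k - z_{k+1})⁻¹`. Moving the `z_k`-integral inside the `z_{k+1}`-integral (Fubini), Cauchy's
theorem kills it, so `L^ε_δ = 0`.

An isolated index exists in both situations of the theorem: take a zero of `δ` of minimal radius
among the zeros lying strictly between two ones of `δ` (when `{δ = 1}` is not an interval), or
between an index with `e_t = 1` and the interval of ones, or between that interval and an index with
`e_t = 2`. Neighbouring radii on contours about the same centre differ, so the minimum is strict.
-/

open Metric

section CircleIntegrals

variable {E : Type*} [NormedAddCommGroup E] [NormedSpace ℂ E]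

theorem intervalIntegral_comm_of_continuous {F : ℝ → ℝ → E} (hF : Continuous (Function.uncurry F))
    {a b c d : ℝ} (hab : a ≤ b) (hcd : c ≤ d) :
    ∫ x in a..b, ∫ y in c..d, F x y = ∫ y in c..d, ∫ x in a..b, F x y := by
  have hint : Integrable (Function.uncurry F)
      ((volume.restrict (Set.Ioc a b)).prod (volume.restrict (Set.Ioc c d))) := by
    rw [Measure.prod_restrict, ← Measure.volume_eq_prod]
    exact (hF.continuousOn.integrableOn_compact (isCompact_Icc.prod isCompact_Icc)).mono_set
      (Set.prod_mono Set.Ioc_subset_Icc_self Set.Ioc_subset_Icc_self)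
  simp only [intervalIntegral.integral_of_le hab, intervalIntegral.integral_of_le hcd]
  exact integral_integral_swap hint

theorem continuousOn_circleIntegral {X : Type*} [TopologicalSpace X] {S : Set X} {c : ℂ} {R : ℝ}
    {F : X → ℂ → E} (hF : ContinuousOn (Function.uncurry F) (S ×ˢ sphere c |R|)) :
    ContinuousOn (fun x => ∮ z in C(c, R), F x z) S := by
  rw [continuousOn_iff_continuous_domRestrict]
  refine intervalIntegral.continuous_parametric_intervalIntegral_of_continuous'
    (f := fun (x : S) θ => deriv (circleMap c R) θ • F x (circleMap c R θ)) ?_ _ _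
  simp only [deriv_circleMap]
  refine .smul (by fun_prop) ?_
  exact hF.comp_continuous
    (by fun_prop : Continuous fun p : S × ℝ => ((p.1 : X), circleMap c R p.2))
    fun p => ⟨p.1.2, circleMap_mem_sphere' _ _ _⟩

theorem circleIntegral_comm {c₀ c₁ : ℂ} {R₀ R₁ : ℝ} {F : ℂ → ℂ → E}
    (hF : ContinuousOn (Function.uncurry F) (sphere c₀ |R₀| ×ˢ sphere c₁ |R₁|)) :
    (∮ z in C(c₀, R₀), ∮ w in C(c₁, R₁), F z w) = ∮ w in C(c₁, R₁), ∮ z in C(c₀, R₀), F z w := by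
  have hcont : Continuous (Function.uncurry fun s t => deriv (circleMap c₀ R₀) s •
      deriv (circleMap c₁ R₁) t • F (circleMap c₀ R₀ s) (circleMap c₁ R₁ t)) := by
    simp only [deriv_circleMap]
    refine .smul (by fun_prop) (.smul (by fun_prop) ?_)
    exact hF.comp_continuous
      (by fun_prop : Continuous fun p : ℝ × ℝ => (circleMap c₀ R₀ p.1, circleMap c₁ R₁ p.2))
      fun p => ⟨circleMap_mem_sphere' _ _ _, circleMap_mem_sphere' _ _ _⟩
  simp only [circleIntegral, ← intervalIntegral.integral_smul]
  rw [intervalIntegral_comm_of_continuous hcont Real.two_pi_pos.le Real.two_pi_pos.le]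
  simp only [smul_comm (deriv (circleMap c₀ R₀) _) (deriv (circleMap c₁ R₁) _)]

end CircleIntegrals

theorem cint_const_mul (c : ℂ) (R : ℝ) (a : ℂ) (f : ℂ → ℂ) :
    cint c R (fun z => a * f z) = a * cint c R f := by
  simp only [cint, circleIntegral.integral_const_mul]
  ring

theorem cint_eq_zero {c : ℂ} {R : ℝ} {f : ℂ → ℂ} (hR : 0 ≤ R) (hf : Set.EqOn f 0 (sphere c R)) :
    cint c R f = 0 := by
  rw [cint, circleIntegral.integral_congr hR hf]
  simp [circleIntegral]

theorem cint_mul_cint_sub_inv_eq_zero {c₀ c₁ : ℂ} {R₀ R₁ : ℝ} {f h : ℂ → ℂ}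
    (hR₀ : 0 ≤ R₀) (hR₁ : 0 ≤ R₁) (hf : DifferentiableOn ℂ f (closedBall c₀ R₀))
    (hh : ContinuousOn h (sphere c₁ R₁)) (hdisj : Disjoint (sphere c₁ R₁) (closedBall c₀ R₀)) :
    cint c₀ R₀ (fun z => f z * cint c₁ R₁ (fun w => (z - w)⁻¹ * h w)) = 0 := by
  have hcont : ContinuousOn (Function.uncurry fun z w => f z * ((z - w)⁻¹ * h w))
      (sphere c₀ |R₀| ×ˢ sphere c₁ |R₁|) := by
    rw [abs_of_nonneg hR₀, abs_of_nonneg hR₁]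
    have hne : ∀ p ∈ sphere c₀ R₀ ×ˢ sphere c₁ R₁, p.1 - p.2 ≠ 0 := by
      rintro ⟨z, w⟩ ⟨hz, hw⟩ hzw
      exact Set.disjoint_left.mp hdisj hw (sub_eq_zero.mp hzw ▸ sphere_subset_closedBall hz)
    exact ((hf.continuousOn.mono sphere_subset_closedBall).comp continuousOn_fst
      fun p hp => hp.1).mul (((continuousOn_fst.sub continuousOn_snd).inv₀ hne).mul
        (hh.comp continuousOn_snd fun p hp => hp.2))
  have hcauchy : ∀ w ∈ sphere c₁ R₁, (∮ z in C(c₀, R₀), f z * ((z - w)⁻¹ * h w)) = 0 := by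
    intro w hw
    have hw' : w ∉ closedBall c₀ R₀ := Set.disjoint_left.mp hdisj hw
    have hdiff : DifferentiableOn ℂ (fun z => f z * ((z - w)⁻¹ * h w)) (closedBall c₀ R₀) :=
      hf.mul (.mul (.inv (by fun_prop) fun z hz hzw => hw' (sub_eq_zero.mp hzw ▸ hz))
        (differentiableOn_const _))
    exact (hdiff.diffContOnCl_ball subset_rfl).circleIntegral_eq_zero hR₀
  have hpull : (fun z => f z * cint c₁ R₁ fun w => (z - w)⁻¹ * h w) =
      fun z => (2 * π * I)⁻¹ * ∮ w in C(c₁, R₁), f z * ((z - w)⁻¹ * h w) := by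
    funext z
    rw [cint, mul_left_comm, ← circleIntegral.integral_const_mul]
  rw [cint, hpull, circleIntegral.integral_const_mul, circleIntegral_comm hcont,
    circleIntegral.integral_congr hR₁ hcauchy]
  simp [circleIntegral]

theorem Finset.prod_Icc_one_add_one {M : Type*} [CommMonoid M] (n : ℕ) (f : ℕ → M) :
    ∏ k ∈ Finset.Icc 1 (n + 1), f k = f 1 * ∏ k ∈ Finset.Icc 1 n, f (k + 1) := by
  rw [← Finset.Ico_add_one_right_eq_Icc, Finset.prod_eq_prod_Ico_succ_bot (by omega),
    ← Finset.Ico_add_one_right_eq_Icc, Finset.prod_Ico_add' f 1 (n + 1) 1]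

theorem fext_one {d : ℕ} {α : Type*} [Zero α] (w : Fin (d + 1) → α) : fext w 1 = w 0 := by
  simp [fext]

theorem fext_add_one {d : ℕ} {α : Type*} [Zero α] (w : Fin (d + 1) → α) {k : ℕ} (hk : 1 ≤ k) :
    fext w (k + 1) = fext (Fin.tail w) k := by
  unfold fext
  by_cases h : k ≤ d
  · rw [dif_pos (by omega), dif_pos ⟨hk, h⟩]
    exact congrArg w (Fin.ext (by simp; omega))
  · rw [dif_neg (by omega), dif_neg (by omega)]

theorem multiCintC_const_mul (d : ℕ) (c : Fin d → ℂ) (R : Fin d → ℝ) (a : ℂ)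
    (f : (Fin d → ℂ) → ℂ) :
    multiCintC d c R (fun w => a * f w) = a * multiCintC d c R f := by
  induction d generalizing a with
  | zero => rfl
  | succ d ih =>
    simp only [multiCintC, ih, cint_const_mul]

theorem multiCintC_succ (d : ℕ) (c : ℕ → ℂ) (R : ℕ → ℝ) (f : (Fin (d + 1) → ℂ) → ℂ) :
    multiCintC (d + 1) (fun t => c (t.1 + 1)) (fun t => R (t.1 + 1)) f =
      cint (c 1) (R 1) fun z => multiCintC d (fun t => c (t.1 + 1 + 1))
        (fun t => R (t.1 + 1 + 1)) fun w => f (Fin.cons z w) :=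
  rfl

/-- `(x - w₁)⁻¹ g₁(w₁) (w₁ - w₂)⁻¹ g₂(w₂) ⋯ (w_{d-1} - w_d)⁻¹ g_d(w_d)`, where `w_k = w (k - 1)`.
-/
def rootedChain : (d : ℕ) → ℂ → (ℕ → ℂ → ℂ) → (Fin d → ℂ) → ℂ
  | 0, _, _, _ => 1
  | d + 1, x, g, w =>
      (x - w 0)⁻¹ * g 1 (w 0) * rootedChain d (w 0) (fun k => g (k + 1)) (Fin.tail w)

theorem rootedChain_eq_prod (d : ℕ) (x : ℂ) (g : ℕ → ℂ → ℂ) (w : Fin (d + 1) → ℂ) :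
    rootedChain (d + 1) x g w = (x - fext w 1)⁻¹ * (∏ k ∈ Finset.Icc 1 (d + 1), g k (fext w k)) *
      ∏ k ∈ Finset.Icc 1 d, (fext w k - fext w (k + 1))⁻¹ := by
  induction d generalizing x g with
  | zero => simp [rootedChain, fext_one]
  | succ d ih =>
    have hg : ∏ k ∈ Finset.Icc 1 (d + 1), g (k + 1) (fext w (k + 1)) =
        ∏ k ∈ Finset.Icc 1 (d + 1), g (k + 1) (fext (Fin.tail w) k) :=
      Finset.prod_congr rfl fun k hk => by rw [fext_add_one w (Finset.mem_Icc.mp hk).1]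
    have hlink : ∏ k ∈ Finset.Icc 1 d, (fext w (k + 1) - fext w (k + 1 + 1))⁻¹ =
        ∏ k ∈ Finset.Icc 1 d, (fext (Fin.tail w) k - fext (Fin.tail w) (k + 1))⁻¹ :=
      Finset.prod_congr rfl fun k hk => by
        rw [fext_add_one w (Finset.mem_Icc.mp hk).1, fext_add_one w (by omega : 1 ≤ k + 1)]
    rw [rootedChain, ih, Finset.prod_Icc_one_add_one (d + 1) fun k => g k (fext w k),
      Finset.prod_Icc_one_add_one d fun k => (fext w k - fext w (k + 1))⁻¹, hg, hlink,
      fext_add_one w le_rfl, fext_one w]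
    ring

section ChainIntegrals

variable {d : ℕ} {c : ℕ → ℂ} {R : ℕ → ℝ} {g : ℕ → ℂ → ℂ}

structure IsContourChain (d : ℕ) (c : ℕ → ℂ) (R : ℕ → ℝ) (g : ℕ → ℂ → ℂ) : Prop where
  radius_nonneg : ∀ k, 1 ≤ k → k ≤ d → 0 ≤ R k
  continuousOn : ∀ k, 1 ≤ k → k ≤ d → ContinuousOn (g k) (sphere (c k) (R k))
  disjoint : ∀ k, 1 ≤ k → k < d → Disjoint (sphere (c k) (R k)) (sphere (c (k + 1)) (R (k + 1)))

theorem IsContourChain.tail (h : IsContourChain (d + 1) c R g) :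
    IsContourChain d (fun k => c (k + 1)) (fun k => R (k + 1)) (fun k => g (k + 1)) where
  radius_nonneg k hk hkd := h.radius_nonneg (k + 1) (by omega) (by omega)
  continuousOn k hk hkd := h.continuousOn (k + 1) (by omega) (by omega)
  disjoint k hk hkd := h.disjoint (k + 1) (by omega) (by omega)

theorem multiCintC_rootedChain_succ (d : ℕ) (x : ℂ) (g : ℕ → ℂ → ℂ) (c : ℕ → ℂ) (R : ℕ → ℝ) :
    multiCintC (d + 1) (fun t => c (t.1 + 1)) (fun t => R (t.1 + 1)) (rootedChain (d + 1) x g) =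
      cint (c 1) (R 1) fun z => (x - z)⁻¹ * (g 1 z * multiCintC d (fun t => c (t.1 + 1 + 1))
        (fun t => R (t.1 + 1 + 1)) (rootedChain d z fun k => g (k + 1))) := by
  rw [multiCintC_succ]
  congr 1
  funext z
  simp only [rootedChain, Fin.cons_zero, Fin.tail_cons, mul_assoc, multiCintC_const_mul]

theorem continuousOn_cint_sub_inv_mul {c : ℂ} {R : ℝ} {h : ℂ → ℂ} {S : Set ℂ} (hR : 0 ≤ R)
    (hh : ContinuousOn h (sphere c R)) (hS : Disjoint S (sphere c R)) :
    ContinuousOn (fun x => cint c R fun z => (x - z)⁻¹ * h z) S := by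
  refine continuousOn_const.mul (continuousOn_circleIntegral ?_)
  rw [abs_of_nonneg hR]
  refine .mul (.inv₀ (by fun_prop) ?_) (hh.comp continuousOn_snd fun p hp => hp.2)
  rintro ⟨x, z⟩ ⟨hx, hz⟩ hxz
  exact Set.disjoint_left.mp hS hx (sub_eq_zero.mp hxz ▸ hz)

theorem IsContourChain.continuousOn_multiCintC_rootedChain (h : IsContourChain d c R g) {S : Set ℂ}
    (hS : 1 ≤ d → Disjoint S (sphere (c 1) (R 1))) :
    ContinuousOn (fun x => multiCintC d (fun t => c (t.1 + 1)) (fun t => R (t.1 + 1))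
      (rootedChain d x g)) S := by
  induction d generalizing c R g S with
  | zero => exact continuousOn_const
  | succ d ih =>
    simp only [multiCintC_rootedChain_succ]
    refine continuousOn_cint_sub_inv_mul (h.radius_nonneg 1 le_rfl (by omega)) ?_ (hS (by omega))
    exact (h.continuousOn 1 le_rfl (by omega)).mul
      (ih h.tail fun hd => h.disjoint 1 le_rfl (by omega))

theorem IsContourChain.multiCintC_rootedChain_eq_zero {k : ℕ} (hk : 1 ≤ k) :
    ∀ {d : ℕ} {x : ℂ} {c : ℕ → ℂ} {R : ℕ → ℝ} {g : ℕ → ℂ → ℂ}, IsContourChain d c R g → k < d →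
      DifferentiableOn ℂ (g k) (closedBall (c k) (R k)) →
      Disjoint (sphere (c (k + 1)) (R (k + 1))) (closedBall (c k) (R k)) →
      (1 < k → Disjoint (sphere (c (k - 1)) (R (k - 1))) (closedBall (c k) (R k))) →
      (k = 1 → x ∉ closedBall (c 1) (R 1)) →
      multiCintC d (fun t => c (t.1 + 1)) (fun t => R (t.1 + 1)) (rootedChain d x g) = 0 := by
  induction k, hk using Nat.le_induction with
  | base =>
    intro d x c R g h hd hdiff hright _ hx
    obtain ⟨d, rfl⟩ : ∃ d', d = d' + 1 + 1 := ⟨d - 2, by omega⟩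
    have hinner : ∀ z, multiCintC (d + 1) (fun t => c (t.1 + 1 + 1)) (fun t => R (t.1 + 1 + 1))
        (rootedChain (d + 1) z fun k => g (k + 1)) =
          cint (c (1 + 1)) (R (1 + 1)) fun w => (z - w)⁻¹ * (g (1 + 1) w * multiCintC d
            (fun t => c (t.1 + 1 + 1 + 1)) (fun t => R (t.1 + 1 + 1 + 1))
            (rootedChain d w fun k => g (k + 1 + 1))) :=
      fun z => multiCintC_rootedChain_succ d z _ (fun k => c (k + 1)) (fun k => R (k + 1))
    rw [multiCintC_rootedChain_succ]
    simp only [hinner, ← mul_assoc (x - _)⁻¹ (g 1 _)]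
    refine cint_mul_cint_sub_inv_eq_zero (f := fun z => (x - z)⁻¹ * g 1 z)
      (h.radius_nonneg 1 le_rfl (by omega)) (h.radius_nonneg (1 + 1) (by omega) (by omega))
      (.mul (.inv (by fun_prop) fun z hz hxz => hx rfl (sub_eq_zero.mp hxz ▸ hz)) hdiff) ?_ hright
    exact (h.continuousOn (1 + 1) (by omega) (by omega)).mul
      (h.tail.tail.continuousOn_multiCintC_rootedChain fun _ =>
        h.disjoint (1 + 1) (by omega) (by omega))
  | succ k hk ih =>
    intro d x c R g h hd hdiff hright hleft _
    obtain ⟨d, rfl⟩ : ∃ d', d = d' + 1 := ⟨d - 1, by omega⟩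
    have hleft' := hleft (by omega)
    rw [multiCintC_rootedChain_succ]
    refine cint_eq_zero (h.radius_nonneg 1 le_rfl (by omega)) fun z hz => ?_
    rw [ih h.tail (by omega) hdiff hright, mul_zero, mul_zero, Pi.zero_apply]
    · rw [show k - 1 + 1 = k + 1 - 1 by omega]
      exact fun _ => hleft'
    · rintro rfl
      exact Set.disjoint_left.mp hleft' hz

end ChainIntegrals

section Contours

variable {q τ r r' : ℝ} {c c' z : ℂ}

theorem disjoint_closedBall_zero_closedBall_one (h : r + r' < 1) :
    Disjoint (closedBall (0 : ℂ) r) (closedBall 1 r') :=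
  closedBall_disjoint_closedBall (by simpa using h)

def IsAdmissibleContour (q τ : ℝ) (c : ℂ) (r : ℝ) : Prop :=
  (c = 0 ∧ τ < r ∧ r < 1 - Real.sqrt q) ∨ (c = 1 ∧ q < r ∧ r < Real.sqrt q)

theorem ne_one_of_norm_lt (hq0 : 0 < q) (hq1 : q < 1) (hz : ‖z‖ < 1 - Real.sqrt q) :
    z ≠ 1 ∧ z ≠ 1 - (q : ℂ) := by
  have hsq : q < Real.sqrt q := Real.lt_sqrt_of_sq_lt (by nlinarith)
  have hnorm : ‖(1 : ℂ) - q‖ = 1 - q := by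
    rw [← Complex.ofReal_one, ← Complex.ofReal_sub, Complex.norm_real,
      Real.norm_of_nonneg (by linarith)]
  constructor <;> rintro rfl
  · rw [norm_one] at hz
    linarith [Real.sqrt_nonneg q]
  · rw [hnorm] at hz; linarith

namespace IsAdmissibleContour

theorem pos (hτ : 0 ≤ τ) (hq0 : 0 < q) (h : IsAdmissibleContour q τ c r) : 0 < r := by
  rcases h with ⟨-, h, -⟩ | ⟨-, h, -⟩ <;> linarith

theorem lt_norm (hτ : τ ≤ 1 - Real.sqrt q) (h : IsAdmissibleContour q τ c r)
    (hz : z ∈ sphere c r) : τ < ‖z‖ := by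
  rw [mem_sphere_iff_norm] at hz
  rcases h with ⟨rfl, h1, -⟩ | ⟨rfl, -, h2⟩
  · rw [sub_zero] at hz
    rwa [hz]
  · have := norm_sub_norm_le (1 : ℂ) z
    rw [norm_sub_rev, hz, norm_one] at this
    linarith

theorem ne_of_mem_sphere (hq0 : 0 < q) (hq1 : q < 1) (h : IsAdmissibleContour q τ c r)
    (hz : z ∈ sphere c r) : z ≠ 1 ∧ z ≠ 1 - (q : ℂ) := by
  rw [mem_sphere_iff_norm] at hz
  rcases h with ⟨rfl, -, h2⟩ | ⟨rfl, h1, -⟩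
  · rw [sub_zero] at hz
    exact ne_one_of_norm_lt hq0 hq1 (hz ▸ h2)
  · constructor <;> rintro rfl
    · rw [sub_self, norm_zero] at hz
      linarith
    · rw [sub_sub_cancel_left, norm_neg, Complex.norm_real, Real.norm_of_nonneg hq0.le] at hz
      linarith

theorem disjoint_sphere (h : IsAdmissibleContour q τ c r) (h' : IsAdmissibleContour q τ c' r')
    (hne : c = c' → r ≠ r') : Disjoint (sphere c r) (sphere c' r') := by
  by_cases hc : c = c'
  · subst hc
    exact Set.disjoint_left.mpr fun z hz hz' => hne rfl (hz.symm.trans hz')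
  rcases h with ⟨rfl, -, h2⟩ | ⟨rfl, -, h2⟩ <;> rcases h' with ⟨rfl, -, h2'⟩ | ⟨rfl, -, h2'⟩
  · exact absurd rfl hc
  · exact (disjoint_closedBall_zero_closedBall_one (by linarith)).mono sphere_subset_closedBall
      sphere_subset_closedBall
  · exact (disjoint_closedBall_zero_closedBall_one (by linarith)).symm.mono
      sphere_subset_closedBall sphere_subset_closedBall
  · exact absurd rfl hc

theorem disjoint_closedBall_zero (h : IsAdmissibleContour q τ c r) (hr : r' < 1 - Real.sqrt q)
    (hout : c = 1 ∨ r' < r) : Disjoint (sphere c r) (closedBall 0 r') := by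
  rcases h with ⟨rfl, -, -⟩ | ⟨rfl, -, h2⟩
  · rcases hout with h | h
    · exact absurd h zero_ne_one
    · exact Set.disjoint_left.mpr fun z hz hz' => by
        rw [mem_sphere_zero_iff_norm] at hz
        rw [mem_closedBall_zero_iff] at hz'
        linarith
  · exact (disjoint_closedBall_zero_closedBall_one (by linarith)).symm.mono_left
      sphere_subset_closedBall

end IsAdmissibleContour

end Contours

theorem differentiableAt_Gfun {q : ℝ} (hq1 : q < 1) {n m a : ℤ} {z : ℂ} (hz0 : z ≠ 0 ∨ 0 ≤ n)
    (hz1 : z ≠ 1) (hzq : z ≠ 1 - (q : ℂ)) : DifferentiableAt ℂ (Gfun q n m a) z := by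
  have h1q : (1 : ℂ) - q ≠ 0 := by
    rw [← Complex.ofReal_one, ← Complex.ofReal_sub, Complex.ofReal_ne_zero]; linarith
  have hden : 1 - z / (1 - (q : ℂ)) ≠ 0 := by
    rw [sub_ne_zero, ne_comm, ne_eq, div_eq_one_iff_eq h1q]; exact hzq
  have hpow : DifferentiableAt ℂ (fun w : ℂ => w ^ n) z := differentiableAt_zpow.mpr hz0
  have hone : DifferentiableAt ℂ (fun w : ℂ => (1 - w) ^ (a + m)) z :=
    (differentiableAt_id.const_sub 1).zpow (.inl (sub_ne_zero.mpr hz1.symm))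
  have hpole : DifferentiableAt ℂ (fun w : ℂ => (1 - w / (1 - (q : ℂ))) ^ m) z :=
    ((differentiableAt_id.div_const _).const_sub 1).zpow (.inl hden)
  exact ((hpow.mul hone).div hpole (zpow_ne_zero _ hden)).div_const _

def LdeltaFactor (q : ℝ) (p : ℕ) (n m : ℕ → ℕ) (a : ℕ → ℤ) (ζ₁ ζ₂ : ℂ) (k : ℕ) (z : ℂ) : ℂ :=
  Gfun q ((n k : ℤ) - n (k - 1)) ((m k : ℤ) - m (k - 1)) (a k - a (k - 1)) z *
    (if k = 1 then (1 - ζ₁) / (1 - z) else 1) * (if k = p then (z - ζ₂)⁻¹ else 1)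

theorem Ldelta_integrand_eq (q : ℝ) (d : ℕ) (n m : ℕ → ℕ) (a : ℕ → ℤ) (ζ₁ ζ₂ A B : ℂ)
    (zv : Fin (d + 1) → ℂ) :
    ((∏ k ∈ Finset.Icc 1 (d + 1),
        Gfun q ((n k : ℤ) - n (k - 1)) ((m k : ℤ) - m (k - 1)) (a k - a (k - 1)) (fext zv k))
      * (∏ k ∈ Finset.Icc 1 (d + 1 - 1), (fext zv k - fext zv (k + 1))⁻¹)
      * ((1 - ζ₁) / (1 - fext zv 1)))
      / (A * B * ((fext zv 1 - ζ₁) * (fext zv (d + 1) - ζ₂))) =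
    -(A * B)⁻¹ * rootedChain (d + 1) ζ₁ (LdeltaFactor q (d + 1) n m a ζ₁ ζ₂) zv := by
  have hprod : ∏ k ∈ Finset.Icc 1 (d + 1), LdeltaFactor q (d + 1) n m a ζ₁ ζ₂ k (fext zv k) =
      (∏ k ∈ Finset.Icc 1 (d + 1),
        Gfun q ((n k : ℤ) - n (k - 1)) ((m k : ℤ) - m (k - 1)) (a k - a (k - 1)) (fext zv k)) *
      ((1 - ζ₁) / (1 - fext zv 1)) * (fext zv (d + 1) - ζ₂)⁻¹ := by
    simp only [LdeltaFactor, Finset.prod_mul_distrib]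
    rw [Finset.prod_ite_eq', Finset.prod_ite_eq', if_pos (by simp), if_pos (by simp)]
  rw [rootedChain_eq_prod, hprod, Nat.add_sub_cancel, ← neg_sub ζ₁ (fext zv 1)]
  simp only [div_eq_mul_inv, mul_inv, inv_neg]
  ring

theorem differentiableAt_LdeltaFactor {q : ℝ} (hq1 : q < 1) {p : ℕ} {n m : ℕ → ℕ} {a : ℕ → ℤ}
    {ζ₁ ζ₂ : ℂ} {k : ℕ} {z : ℂ} (hz0 : z ≠ 0 ∨ n (k - 1) ≤ n k) (hz1 : z ≠ 1)
    (hzq : z ≠ 1 - (q : ℂ)) (hζ₂ : k = p → z ≠ ζ₂) :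
    DifferentiableAt ℂ (LdeltaFactor q p n m a ζ₁ ζ₂ k) z := by
  have hG := differentiableAt_Gfun (m := (m k : ℤ) - m (k - 1)) (a := a k - a (k - 1)) hq1
    (hz0.imp_right fun h => sub_nonneg.mpr (Int.ofNat_le.mpr h)) hz1 hzq
  refine .mul (.mul hG ?_) ?_
  · split_ifs
    · exact (differentiableAt_const _).div (differentiableAt_id.const_sub 1)
        (sub_ne_zero.mpr hz1.symm)
    · exact differentiableAt_const _
  · split_ifs with hkp
    · exact (differentiableAt_id.sub_const _).inv (sub_ne_zero.mpr (hζ₂ hkp))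
    · exact differentiableAt_const _

theorem isAdmissibleContour_of_cases {q τ : ℝ} {δ : ℕ} {ρ : ℝ} (hδ : δ = 0 ∨ δ = 1)
    (hρ : (δ = 0 → τ < ρ ∧ ρ < 1 - Real.sqrt q) ∧ (δ = 1 → q < ρ ∧ ρ < Real.sqrt q)) :
    IsAdmissibleContour q τ (if δ = 1 then 1 else 0) ρ := by
  rcases hδ with rfl | rfl
  · exact .inl ⟨by simp, hρ.1 rfl⟩
  · exact .inr ⟨by simp, hρ.2 rfl⟩

def IsIsolatedDisc (δ : ℕ → ℕ) (ρ : ℕ → ℝ) (k : ℕ) : Prop :=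
  δ k = 0 ∧ (δ (k - 1) = 1 ∨ ρ k < ρ (k - 1)) ∧ (δ (k + 1) = 1 ∨ ρ k < ρ (k + 1))

theorem Ldelta_eq_zero_of_isIsolatedDisc {q : ℝ} (hq0 : 0 < q) (hq1 : q < 1) {p : ℕ} {n m : ℕ → ℕ}
    {a : ℕ → ℤ} {τ1 τ2 : ℝ} (hτ2 : 0 < τ2) (hτ21 : τ2 < τ1) (hτ1 : τ1 < 1 - Real.sqrt q)
    {δ : ℕ → ℕ} (hδ : ∀ k ∈ Finset.Icc 1 p, δ k = 0 ∨ δ k = 1) {ρ : ℕ → ℝ}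
    (hρ : ∀ k ∈ Finset.Icc 1 p,
      (δ k = 0 → τ1 < ρ k ∧ ρ k < 1 - Real.sqrt q) ∧ (δ k = 1 → q < ρ k ∧ ρ k < Real.sqrt q))
    (hdistinct : ∀ k, 1 ≤ k → k < p → δ k = δ (k + 1) → ρ k ≠ ρ (k + 1))
    {k : ℕ} (hk : 1 < k) (hkp : k < p) (hnk : n (k - 1) ≤ n k) (hiso : IsIsolatedDisc δ ρ k)
    (i j : ℕ) : Ldelta q p n m a τ1 τ2 δ ρ i j = 0 := by
  obtain ⟨hδk, hleft, hright⟩ := hiso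
  obtain ⟨d, rfl⟩ : ∃ d, p = d + 1 := ⟨p - 1, by omega⟩
  set c : ℕ → ℂ := fun k => if δ k = 1 then 1 else 0 with hc
  have hmem : ∀ {k}, 1 ≤ k → k ≤ d + 1 → k ∈ Finset.Icc 1 (d + 1) := fun h1 h2 =>
    Finset.mem_Icc.mpr ⟨h1, h2⟩
  have hadm : ∀ k, 1 ≤ k → k ≤ d + 1 → IsAdmissibleContour q τ1 (c k) (ρ k) := fun k h1 h2 =>
    isAdmissibleContour_of_cases (hδ k (hmem h1 h2)) (hρ k (hmem h1 h2))
  have hτ1pos : 0 < τ1 := hτ2.trans hτ21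
  have hck : c k = 0 := by simp [hc, hδk]
  have hρk : ρ k < 1 - Real.sqrt q := ((hρ k (hmem (by omega) hkp.le)).1 hδk).2
  have hneighbour : ∀ k', 1 ≤ k' → k' ≤ d + 1 → (δ k' = 1 ∨ ρ k < ρ k') →
      Disjoint (sphere (c k') (ρ k')) (closedBall (c k) (ρ k)) := fun k' h1 h2 hout => by
    rw [hck]
    exact (hadm k' h1 h2).disjoint_closedBall_zero hρk (hout.imp_left fun h => by simp [hc, h])
  unfold Ldelta
  refine cint_eq_zero hτ1pos.le fun ζ₁ hζ₁ => cint_eq_zero hτ2.le fun ζ₂ hζ₂ => ?_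
  rw [mem_sphere_zero_iff_norm] at hζ₁ hζ₂
  have hsphere : ∀ k, 1 ≤ k → k ≤ d + 1 → ContinuousOn (LdeltaFactor q (d + 1) n m a ζ₁ ζ₂ k)
      (sphere (c k) (ρ k)) := fun k h1 h2 z hz => by
    have hnorm := (hadm k h1 h2).lt_norm hτ1.le hz
    obtain ⟨hz1, hzq⟩ := (hadm k h1 h2).ne_of_mem_sphere hq0 hq1 hz
    refine (differentiableAt_LdeltaFactor hq1 (.inl ?_) hz1 hzq fun _ => ?_).continuousAt
      |>.continuousWithinAt
    · exact norm_pos_iff.mp (hτ1pos.trans hnorm)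
    · rintro rfl
      linarith
  have hcenter : ∀ k, 1 ≤ k → k < d + 1 → c k = c (k + 1) → δ k = δ (k + 1) := fun k h1 h2 => by
    rcases hδ k (hmem h1 h2.le) with h | h <;> rcases hδ (k + 1) (hmem (by omega) h2) with h' | h'
      <;> simp [hc, h, h']
  have hchain : IsContourChain (d + 1) c ρ (LdeltaFactor q (d + 1) n m a ζ₁ ζ₂) :=
    ⟨fun k h1 h2 => ((hadm k h1 h2).pos hτ1pos.le hq0).le, hsphere, fun k h1 h2 =>
      (hadm k h1 h2.le).disjoint_sphere (hadm (k + 1) (by omega) h2) fun hcc =>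
        hdistinct k h1 h2 (hcenter k h1 h2 hcc)⟩
  have hdiff : DifferentiableOn ℂ (LdeltaFactor q (d + 1) n m a ζ₁ ζ₂ k)
      (closedBall (c k) (ρ k)) := fun z hz => by
    rw [hck, mem_closedBall_zero_iff] at hz
    obtain ⟨hz1, hzq⟩ := ne_one_of_norm_lt hq0 hq1 (hz.trans_lt hρk)
    exact (differentiableAt_LdeltaFactor hq1 (.inr hnk) hz1 hzq
      fun h => absurd h (by omega)).differentiableWithinAt
  simp only [Ldelta_integrand_eq, multiCintC_const_mul]
  rw [hchain.multiCintC_rootedChain_eq_zero (by omega) hkp hdiff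
    (hneighbour (k + 1) (by omega) hkp hright)
    (fun _ => hneighbour (k - 1) (by omega) (by omega) hleft) (fun h => absurd h (by omega)),
    mul_zero, Pi.zero_apply]

section Combinatorics

variable {p : ℕ} {δ e : ℕ → ℕ} {ρ : ℕ → ℝ}

theorem exists_isIsolatedDisc {s t u : ℕ} (hst : s < t) (htu : t < u)
    (hδt : δ t = 0) (hδ : ∀ x, s < x → x < u → δ x = 0 ∨ δ x = 1)
    (hdistinct : ∀ x, s < x → x + 1 < u → δ x = δ (x + 1) → ρ x ≠ ρ (x + 1))
    (hs : δ s = 1 ∨ ρ (s + 1) < ρ s) (hu : δ u = 1 ∨ ρ (u - 1) < ρ u) :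
    ∃ k, s < k ∧ k < u ∧ IsIsolatedDisc δ ρ k := by
  classical
  obtain ⟨k, hk, hmin⟩ := ((Finset.Ioo s u).filter (δ · = 0)).exists_min_image ρ
    ⟨t, by simp [hst, htu, hδt]⟩
  simp only [Finset.mem_filter, Finset.mem_Ioo] at hk hmin
  obtain ⟨⟨hsk, hku⟩, hδk⟩ := hk
  have hlt : ∀ x, s < x → x < u → δ x ≠ 1 → (x + 1 = k ∨ x = k + 1) → ρ k < ρ x := by
    intro x hsx hxu hx1 hxk
    have hx0 : δ x = 0 := (hδ x hsx hxu).resolve_right hx1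
    refine (hmin x ⟨⟨hsx, hxu⟩, hx0⟩).lt_of_ne ?_
    rcases hxk with rfl | rfl
    · exact (hdistinct x hsx hku (hx0.trans hδk.symm)).symm
    · exact hdistinct k hsk hxu (hδk.trans hx0.symm)
  refine ⟨k, hsk, hku, hδk, ?_, ?_⟩
  · rcases Nat.lt_or_ge s (k - 1) with h | h
    · exact or_iff_not_imp_left.mpr (hlt (k - 1) h (by omega) · (.inl (by omega)))
    · rwa [show k - 1 = s by omega, show k = s + 1 by omega]
  · rcases Nat.lt_or_ge (k + 1) u with h | h
    · exact or_iff_not_imp_left.mpr (hlt (k + 1) (by omega) h · (.inr rfl))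
    · rwa [show k + 1 = u by omega, show k = u - 1 by omega]

theorem exists_one_zero_one_of_not_interval (hδ : ∀ k ∈ Finset.Icc 1 p, δ k = 0 ∨ δ k = 1)
    (hne : ∃ k ∈ Finset.Icc 1 p, δ k = 1)
    (hni : ¬∃ k1 k2 : ℕ, k1 < k2 ∧ k2 ≤ p ∧ ∀ k ∈ Finset.Icc 1 p, (δ k = 1 ↔ (k1 < k ∧ k ≤ k2))) :
    ∃ s t u, 1 ≤ s ∧ s < t ∧ t < u ∧ u ≤ p ∧ δ s = 1 ∧ δ t = 0 ∧ δ u = 1 := by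
  classical
  by_contra hgap
  push Not at hgap
  obtain ⟨k₀, hk₀, hδk₀⟩ := hne
  rw [Finset.mem_Icc] at hk₀
  have hex : ∃ x, 1 ≤ x ∧ δ x = 1 := ⟨k₀, hk₀.1, hδk₀⟩
  set s := Nat.find hex
  set u := Nat.findGreatest (fun x => δ x = 1) p
  have hs : 1 ≤ s ∧ δ s = 1 := Nat.find_spec hex
  have hu : δ u = 1 := Nat.findGreatest_spec (P := fun x => δ x = 1) hk₀.2 hδk₀
  have hup : u ≤ p := Nat.findGreatest_le p
  have hsu : s ≤ u := Nat.le_findGreatest ((Nat.find_min' hex ⟨hk₀.1, hδk₀⟩).trans hk₀.2) hs.2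
  refine hni ⟨s - 1, u, by omega, hup, fun k hk => ?_⟩
  rw [Finset.mem_Icc] at hk
  refine ⟨fun h => ⟨?_, Nat.le_findGreatest hk.2 h⟩, fun ⟨hsk, hku⟩ => ?_⟩
  · have := Nat.find_min' hex ⟨hk.1, h⟩
    omega
  · refine (hδ k (Finset.mem_Icc.mpr hk)).resolve_left fun h0 =>
      hgap s k u hs.1 ?_ ?_ hup hs.2 h0 hu
    · have : s ≠ k := fun h => by rw [h] at hs; omega
      omega
    · have : k ≠ u := fun h => by rw [← h] at hu; omega
      omega

theorem radius_ne_of_order (he : ∀ k ∈ Finset.Icc 1 (p - 1), e k = 1 ∨ e k = 2)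
    (hρord : ∀ k ∈ Finset.Icc 1 (p - 1), δ k = δ (k + 1) →
      (e k = 2 → ρ k < ρ (k + 1)) ∧ (e k = 1 → ρ (k + 1) < ρ k))
    (k : ℕ) (h1 : 1 ≤ k) (h2 : k < p) (hδk : δ k = δ (k + 1)) : ρ k ≠ ρ (k + 1) := by
  have hk : k ∈ Finset.Icc 1 (p - 1) := Finset.mem_Icc.mpr ⟨h1, by omega⟩
  rcases he k hk with h | h
  · exact ((hρord k hk hδk).2 h).ne'
  · exact ((hρord k hk hδk).1 h).ne

theorem exists_isIsolatedDisc_of_not_interval (hδ : ∀ k ∈ Finset.Icc 1 p, δ k = 0 ∨ δ k = 1)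
    (hne : ∃ k ∈ Finset.Icc 1 p, δ k = 1)
    (hdistinct : ∀ k, 1 ≤ k → k < p → δ k = δ (k + 1) → ρ k ≠ ρ (k + 1))
    (hni : ¬∃ k1 k2 : ℕ, k1 < k2 ∧ k2 ≤ p ∧ ∀ k ∈ Finset.Icc 1 p, (δ k = 1 ↔ (k1 < k ∧ k ≤ k2))) :
    ∃ k, 1 < k ∧ k < p ∧ IsIsolatedDisc δ ρ k := by
  obtain ⟨s, t, u, hs, hst, htu, hup, hδs, hδt, hδu⟩ :=
    exists_one_zero_one_of_not_interval hδ hne hni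
  obtain ⟨k, hsk, hku, hk⟩ := exists_isIsolatedDisc hst htu hδt
    (fun x h1 h2 => hδ x (Finset.mem_Icc.mpr ⟨by omega, by omega⟩))
    (fun x h1 h2 => hdistinct x (by omega) (by omega)) (.inl hδs) (.inl hδu)
  exact ⟨k, by omega, by omega, hk⟩

theorem exists_isIsolatedDisc_of_interval (hδ : ∀ k ∈ Finset.Icc 1 p, δ k = 0 ∨ δ k = 1)
    (he : ∀ k ∈ Finset.Icc 1 (p - 1), e k = 1 ∨ e k = 2)
    (hρord : ∀ k ∈ Finset.Icc 1 (p - 1), δ k = δ (k + 1) →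
      (e k = 2 → ρ k < ρ (k + 1)) ∧ (e k = 1 → ρ (k + 1) < ρ k))
    {k1 k2 : ℕ} (hk12 : k1 < k2) (hk2p : k2 ≤ p)
    (hiv : ∀ k ∈ Finset.Icc 1 p, (δ k = 1 ↔ (k1 < k ∧ k ≤ k2)))
    (hbad : ¬ ((∀ t : ℕ, 1 ≤ t → t < k1 → e t = 2) ∧ (∀ t : ℕ, k2 < t → t ≤ p - 1 → e t = 1))) :
    ∃ k, 1 < k ∧ k < p ∧ IsIsolatedDisc δ ρ k := by
  have hone : ∀ x, k1 < x → x ≤ k2 → δ x = 1 := fun x h1 h2 =>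
    (hiv x (Finset.mem_Icc.mpr ⟨by omega, by omega⟩)).mpr ⟨h1, h2⟩
  have hzero : ∀ x, 1 ≤ x → x ≤ p → ¬(k1 < x ∧ x ≤ k2) → δ x = 0 := fun x h1 h2 hx =>
    (hδ x (Finset.mem_Icc.mpr ⟨h1, h2⟩)).resolve_right fun h =>
      hx ((hiv x (Finset.mem_Icc.mpr ⟨h1, h2⟩)).mp h)
  have hdistinct := radius_ne_of_order he hρord
  have hmem : ∀ t, 1 ≤ t → t < p → t ∈ Finset.Icc 1 (p - 1) := fun t h1 h2 =>
    Finset.mem_Icc.mpr ⟨h1, by omega⟩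
  rcases not_and_or.mp hbad with hleft | hright
  · push Not at hleft
    obtain ⟨t, ht1, htk1, het⟩ := hleft
    have hδt := hzero t ht1 (by omega) (by omega)
    have hδt' := hzero (t + 1) (by omega) (by omega) (by omega)
    have hρt := (hρord t (hmem t ht1 (by omega)) (hδt.trans hδt'.symm)).2
      ((he t (hmem t ht1 (by omega))).resolve_right het)
    obtain ⟨k, htk, hku, hk⟩ := exists_isIsolatedDisc (u := k1 + 1) (by omega) (by omega) hδt'
      (fun x h1 h2 => hδ x (Finset.mem_Icc.mpr ⟨by omega, by omega⟩))
      (fun x h1 h2 => hdistinct x (by omega) (by omega)) (.inr hρt) (.inl (hone _ (by omega) hk12))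
    exact ⟨k, by omega, by omega, hk⟩
  · push Not at hright
    obtain ⟨t, htk2, htp, het⟩ := hright
    have hδt := hzero t (by omega) (by omega) (by omega)
    have hδt' := hzero (t + 1) (by omega) (by omega) (by omega)
    have hρt := (hρord t (hmem t (by omega) (by omega)) (hδt.trans hδt'.symm)).1
      ((he t (hmem t (by omega) (by omega))).resolve_left het)
    obtain ⟨k, hk2k, hku, hk⟩ := exists_isIsolatedDisc (s := k2) (u := t + 1) (by omega)
      (by omega : k2 + 1 < t + 1) (hzero (k2 + 1) (by omega) (by omega) (by omega))
      (fun x h1 h2 => hδ x (Finset.mem_Icc.mpr ⟨by omega, by omega⟩))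
      (fun x h1 h2 => hdistinct x (by omega) (by omega)) (.inl (hone _ hk12 le_rfl))
      (.inr (by simpa using hρt))
    exact ⟨k, by omega, by omega, hk⟩

end Combinatorics

theorem statement11_general
    (q : ℝ) (hq0 : 0 < q) (hq1 : q < 1)
    (p N : ℕ)
    (n : ℕ → ℕ)
    (hnmono : ∀ k ∈ Finset.Icc 1 (p - 1), n k < n (k + 1))
    (m : ℕ → ℕ)
    (a : ℕ → ℤ)
    (e : ℕ → ℕ) (he : ∀ k ∈ Finset.Icc 1 (p - 1), e k = 1 ∨ e k = 2)
    (δ : ℕ → ℕ) (hδ : ∀ k ∈ Finset.Icc 1 p, δ k = 0 ∨ δ k = 1)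
    (hδne : ∃ k ∈ Finset.Icc 1 p, δ k = 1)
    (τ1 τ2 : ℝ) (hτ2 : 0 < τ2) (hτ21 : τ2 < τ1) (hτ1 : τ1 < 1 - Real.sqrt q)
    (ρ : ℕ → ℝ)
    (hρ : ∀ k ∈ Finset.Icc 1 p,
      (δ k = 0 → τ1 < ρ k ∧ ρ k < 1 - Real.sqrt q) ∧
      (δ k = 1 → q < ρ k ∧ ρ k < Real.sqrt q))
    (hρord : ∀ k ∈ Finset.Icc 1 (p - 1), δ k = δ (k + 1) →
      (e k = 2 → ρ k < ρ (k + 1)) ∧ (e k = 1 → ρ (k + 1) < ρ k)) :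
    ((¬ ∃ k1 k2 : ℕ, k1 < k2 ∧ k2 ≤ p ∧
        ∀ k ∈ Finset.Icc 1 p, (δ k = 1 ↔ (k1 < k ∧ k ≤ k2))) →
      ∀ i j : ℕ, 1 ≤ i → i ≤ N → 1 ≤ j → j ≤ N →
        Ldelta q p n m a τ1 τ2 δ ρ i j = 0)
    ∧ (∀ k1 k2 : ℕ, k1 < k2 → k2 ≤ p →
        (∀ k ∈ Finset.Icc 1 p, (δ k = 1 ↔ (k1 < k ∧ k ≤ k2))) →
        ¬ ((∀ t : ℕ, 1 ≤ t → t < k1 → e t = 2) ∧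
           (∀ t : ℕ, k2 < t → t ≤ p - 1 → e t = 1)) →
        ∀ i j : ℕ, 1 ≤ i → i ≤ N → 1 ≤ j → j ≤ N →
          Ldelta q p n m a τ1 τ2 δ ρ i j = 0) := by
  have hdistinct := radius_ne_of_order he hρord
  have hvanish : ∀ k, 1 < k → k < p → IsIsolatedDisc δ ρ k →
      ∀ i j, Ldelta q p n m a τ1 τ2 δ ρ i j = 0 := by
    intro k hk hkp hiso
    have hnk := hnmono (k - 1) (Finset.mem_Icc.mpr ⟨by omega, by omega⟩)
    rw [Nat.sub_add_cancel hk.le] at hnk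
    exact Ldelta_eq_zero_of_isIsolatedDisc hq0 hq1 hτ2 hτ21 hτ1 hδ hρ hdistinct hk hkp hnk.le hiso
  refine ⟨fun hni i j _ _ _ _ => ?_, fun k1 k2 hk12 hk2p hiv hbad i j _ _ _ _ => ?_⟩
  · obtain ⟨k, hk, hkp, hiso⟩ := exists_isIsolatedDisc_of_not_interval hδ hδne hdistinct hni
    exact hvanish k hk hkp hiso i j
  · obtain ⟨k, hk, hkp, hiso⟩ := exists_isIsolatedDisc_of_interval hδ he hρord hk12 hk2p hiv hbad
    exact hvanish k hk hkp hiso i j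

/-- (Lemma `lem:deltanonzero` of the paper.)  For `δ` not identically
zero, `L^ε_δ ≡ 0` unless the set `{k : δ_k = 1}` is an interval `(k_1, k_2]`; and when
it is such an interval, `L^ε_δ ≡ 0` unless `ε_1 = … = ε_{k_1−1} = 2` and
`ε_{k_2+1} = … = ε_{p−1} = 1`. -/
theorem statement11
    (q : ℝ) (hq0 : 0 < q) (hq1 : q < 1)
    (p N : ℕ) (hp : 2 ≤ p)
    (n : ℕ → ℕ) (hn0 : n 0 = 0) (hn1 : 1 ≤ n 1)
    (hnmono : ∀ k ∈ Finset.Icc 1 (p - 1), n k < n (k + 1)) (hnp : n p = N)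
    (m : ℕ → ℕ) (hm0 : m 0 = 0) (hm1 : 0 < m 1)
    (hmmono : ∀ k ∈ Finset.Icc 1 (p - 1), m k < m (k + 1))
    (a : ℕ → ℤ) (ha0 : a 0 = 0)
    (e : ℕ → ℕ) (he : ∀ k ∈ Finset.Icc 1 (p - 1), e k = 1 ∨ e k = 2)
    (δ : ℕ → ℕ) (hδ : ∀ k ∈ Finset.Icc 1 p, δ k = 0 ∨ δ k = 1)
    (hδne : ∃ k ∈ Finset.Icc 1 p, δ k = 1)
    (τ1 τ2 : ℝ) (hτ2 : 0 < τ2) (hτ21 : τ2 < τ1) (hτ1 : τ1 < 1 - Real.sqrt q)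
    (ρ : ℕ → ℝ)
    (hρ : ∀ k ∈ Finset.Icc 1 p,
      (δ k = 0 → τ1 < ρ k ∧ ρ k < 1 - Real.sqrt q) ∧
      (δ k = 1 → q < ρ k ∧ ρ k < Real.sqrt q))
    (hρord : ∀ k ∈ Finset.Icc 1 (p - 1), δ k = δ (k + 1) →
      (e k = 2 → ρ k < ρ (k + 1)) ∧ (e k = 1 → ρ (k + 1) < ρ k)) :
    ((¬ ∃ k1 k2 : ℕ, k1 < k2 ∧ k2 ≤ p ∧
        ∀ k ∈ Finset.Icc 1 p, (δ k = 1 ↔ (k1 < k ∧ k ≤ k2))) →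
      ∀ i j : ℕ, 1 ≤ i → i ≤ N → 1 ≤ j → j ≤ N →
        Ldelta q p n m a τ1 τ2 δ ρ i j = 0)
    ∧ (∀ k1 k2 : ℕ, k1 < k2 → k2 ≤ p →
        (∀ k ∈ Finset.Icc 1 p, (δ k = 1 ↔ (k1 < k ∧ k ≤ k2))) →
        ¬ ((∀ t : ℕ, 1 ≤ t → t < k1 → e t = 2) ∧
           (∀ t : ℕ, k2 < t → t ≤ p - 1 → e t = 1)) →
        ∀ i j : ℕ, 1 ≤ i → i ≤ N → 1 ≤ j → j ≤ N →
          Ldelta q p n m a τ1 τ2 δ ρ i j = 0) :=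
  statement11_general q hq0 hq1 p N n hnmono m a e he δ hδ hδne τ1 τ2 hτ2 hτ21 hτ1 ρ hρ hρord

end
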